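/- For any commutative ring R, the set R((t))^√ of formal Laurent series over R all of whose coefficients in strictly negative degrees are nilpotent is an R-subalgebra of the Laurent series ring R((t)): it contains the constants, and is closed under addition and multiplication. -/

import Mathlib

/-- `R((t))^√`: the set of formal Laurent series over `R` all of whose coefficients in
strictly negative degrees are nilpotent. -/
def sqrtLaurent (R : Type*) [CommRing R] : Set (LaurentSeries R) :=
  {f | ∀ i : ℤ, i < 0 → IsNilpotent (f.coeff i)}

/-!
The nilpotent elements of `R` form an ideal, the nilradical, and for any ideal `I` the series
whose coefficients in negative degrees lie in `I` are closed under products: in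
`(f * g).coeff i = ∑_{a + b = i} f.coeff a * g.coeff b` with `i < 0`, every pair has `a < 0`
or `b < 0`, so every term lies in `I`.
-/

namespace HahnSeries

variable {Γ R : Type*} [AddCommMonoid Γ] [LinearOrder Γ] [IsOrderedCancelAddMonoid Γ]
  [CommSemiring R]

def negCoeffSubsemiring (I : Ideal R) : Subsemiring (HahnSeries Γ R) where
  carrier := {f | ∀ i < 0, f.coeff i ∈ I}
  zero_mem' _ _ := I.zero_mem
  one_mem' i hi := by
    rw [coeff_one, if_neg hi.ne]
    exact I.zero_mem
  add_mem' hf hg i hi := I.add_mem (hf i hi) (hg i hi)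
  mul_mem' {f g} hf hg i hi := by
    rw [coeff_mul]
    refine I.sum_mem fun ij hij => ?_
    have hsum : ij.1 + ij.2 = i := (Finset.mem_antidiagonal.mp hij).2.2
    rcases lt_or_ge ij.1 0 with h₁ | h₁
    · exact I.mul_mem_right _ (hf _ h₁)
    · have h₂ : ij.2 < 0 := lt_of_not_ge fun h₂ => hi.not_ge (hsum ▸ add_nonneg h₁ h₂)
      exact I.mul_mem_left _ (hg _ h₂)

end HahnSeries

namespace LaurentSeries

variable {R : Type*} [CommSemiring R] (S : Type*) [CommSemiring S] [Algebra S (PowerSeries R)]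

/-- Stated for the algebra structure `HahnSeries.powerSeriesAlgebra`, which is the instance
`Algebra R (LaurentSeries R)` resolves to; it is not defeq to `HahnSeries.instAlgebra`. -/
def negCoeffSubalgebra (I : Ideal R) : Subalgebra S (LaurentSeries R) where
  __ := HahnSeries.negCoeffSubsemiring I
  algebraMap_mem' r i hi := by
    rw [HahnSeries.algebraMap_apply', PowerSeries.coeff_coe, if_pos hi]
    exact I.zero_mem

@[simp]
theorem mem_negCoeffSubalgebra {I : Ideal R} {f : LaurentSeries R} :
    f ∈ negCoeffSubalgebra S I ↔ ∀ i < 0, f.coeff i ∈ I :=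
  Iff.rfl

end LaurentSeries

theorem coe_negCoeffSubalgebra_nilradical (R : Type*) [CommRing R] :
    (LaurentSeries.negCoeffSubalgebra R (nilradical R) : Set (LaurentSeries R)) =
      sqrtLaurent R := by
  ext f
  simp [sqrtLaurent, mem_nilradical]

theorem sqrtLaurent_isSubalgebra (R : Type*) [CommRing R] :
    (∀ r : R, algebraMap R (LaurentSeries R) r ∈ sqrtLaurent R) ∧
    (∀ f g : LaurentSeries R, f ∈ sqrtLaurent R → g ∈ sqrtLaurent R →
      f + g ∈ sqrtLaurent R) ∧
    (∀ f g : LaurentSeries R, f ∈ sqrtLaurent R → g ∈ sqrtLaurent R →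
      f * g ∈ sqrtLaurent R) ∧
    ∃ A : Subalgebra R (LaurentSeries R), (A : Set (LaurentSeries R)) = sqrtLaurent R := by
  set A := LaurentSeries.negCoeffSubalgebra R (nilradical R)
  rw [← coe_negCoeffSubalgebra_nilradical R]
  exact ⟨A.algebraMap_mem, fun _ _ => A.add_mem, fun _ _ => A.mul_mem, A, rfl⟩
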